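/- arXiv:1505.01961 — 5 statements merged into one kernel-verified Lean document; each statement's English description precedes it below -/
import Mathlib

section
/- The number of Motzkin paths of length n all of whose horizontal steps lie at level k equals Σ_{j=0}^{⌊n/2⌋} Σ_i p(2j, k, i) · C(n - 2j + i - 1, n - 2j), where p(2j, k, i) is the number of Dyck paths of length 2j having exactly i points at height k. -/
/-- A step of a Dyck path: `true` = up step (1,1), `false` = down step (1,-1). -/
def dstep (b : Bool) : ℤ := if b then 1 else -1

/-- Height of the path after its first `k` steps. -/
def dheight (p : List Bool) (k : ℕ) : ℤ := ((p.take k).map dstep).sum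

/-- A Dyck path: ends at height 0 and never goes below the x-axis. -/
def IsDyck (p : List Bool) : Prop :=
  (p.map dstep).sum = 0 ∧ ∀ k, 0 ≤ dheight p k

/-- Number of lattice points of the path at level `l` (its "feet" at level `l`). -/
def feet (p : List Bool) (l : ℤ) : ℕ :=
  ((List.range (p.length + 1)).map (dheight p)).count l

/-- The frame of a Dyck path: at position `k`, the number of its points at height `k`. -/
def frame (p : List Bool) : ℕ → ℕ := fun k => feet p (k : ℤ)

/-- `DyckFeet m l j` = number of Dyck paths of length `m` with exactly `j` points at level `l`. -/
noncomputable def DyckFeet (m : ℕ) (l : ℤ) (j : ℕ) : ℕ :=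
  Set.ncard {p : List Bool | p.length = m ∧ IsDyck p ∧ feet p l = j}

/-- A sequence is admissible if it is the frame of some Dyck path. -/
def Admissible (I : ℕ → ℕ) : Prop := ∃ p : List Bool, IsDyck p ∧ frame p = I

/-- A step of a Motzkin path. -/
inductive MStep
  | up
  | level
  | down

/-- The vertical displacement of a Motzkin step. -/
def mval : MStep → ℤ
  | .up => 1
  | .level => 0
  | .down => -1

/-- Height of a Motzkin path after its first  steps. -/
def mheight (p : List MStep) (k : ℕ) : ℤ := ((p.take k).map mval).sum

/-- A Motzkin path: ends at height 0 and never goes below the x-axis. -/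
def IsMotzkin (p : List MStep) : Prop :=
  (p.map mval).sum = 0 ∧ ∀ k, 0 ≤ mheight p k

/-- A k-Motzkin path: a Motzkin path all of whose horizontal steps lie at height k. -/
def IsKMotzkin (k : ℤ) (p : List MStep) : Prop :=
  IsMotzkin p ∧ ∀ i < p.length, p.getD i .up = .level → mheight p i = k

/-!
Deleting the horizontal steps of a `k`-Motzkin path `p` of length `n` leaves a Dyck path `q`
of some length `2j`, and `p` is recovered from `q` together with the multiset of lattice points
of `q` at which its `n - 2j` horizontal steps sit; these points all lie at height `k`.
Conversely, every multiset of `n - 2j` points of `q` at height `k` arises this way. So the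
paths over `q` are counted by stars and bars, `C(n - 2j + i - 1, n - 2j)` where `i` is the
number of points of `q` at height `k`, and grouping the Dyck paths by `j` and `i` gives the sum.
-/

open Finset

theorem Set.ncard_eq_sum_ncard_fiberwise {α β : Type*} [DecidableEq β] {s : Set α}
    {t : Finset β} {f : α → β} (hs : s.Finite) (hf : ∀ a ∈ s, f a ∈ t) :
    s.ncard = ∑ b ∈ t, {a ∈ s | f a = b}.ncard := by
  rw [Set.ncard_eq_toFinset_card s hs,
    card_eq_sum_card_fiberwise fun a ha => hf a (hs.mem_toFinset.1 ha)]
  refine sum_congr rfl fun b _ => ?_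
  rw [← Set.ncard_coe_finset]
  congr 1
  ext a
  simp

namespace MStep

instance : Finite MStep :=
  Finite.of_surjective ![up, level, down] fun
    | up => ⟨0, rfl⟩
    | level => ⟨1, rfl⟩
    | down => ⟨2, rfl⟩

def ofBool : Bool → MStep
  | true => up
  | false => down

def toBool? : MStep → Option Bool
  | up => some true
  | level => none
  | down => some false

@[simp] lemma ofBool_ne_level (b : Bool) : ofBool b ≠ level := by cases b <;> simp [ofBool]

@[simp] lemma mval_ofBool (b : Bool) : mval (ofBool b) = dstep b := by cases b <;> rfl

@[simp] lemma toBool?_ofBool (b : Bool) : toBool? (ofBool b) = some b := by cases b <;> rfl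

@[elab_as_elim]
lemma list_induction {motive : List MStep → Prop} (nil : motive [])
    (level : ∀ p, motive p → motive (level :: p))
    (ofBool : ∀ b p, motive p → motive (ofBool b :: p)) : ∀ p, motive p
  | [] => nil
  | .level :: p => level p (list_induction nil level ofBool p)
  | .up :: p => ofBool true p (list_induction nil level ofBool p)
  | .down :: p => ofBool false p (list_induction nil level ofBool p)

end MStep

open MStep

def dyckPart (p : List MStep) : List Bool := p.filterMap toBool?

/-- Each horizontal step of `p` contributes the index of the lattice point of `dyckPart p` at
which it sits; `insertLevels` inverts this encoding. -/
def levelSlots : List MStep → Multiset ℕ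
  | [] => 0
  | .level :: p => 0 ::ₘ levelSlots p
  | .up :: p | .down :: p => (levelSlots p).map (· + 1)

def insertLevels : List Bool → (ℕ → ℕ) → List MStep
  | [], c => List.replicate (c 0) level
  | b :: q, c => List.replicate (c 0) level ++ ofBool b :: insertLevels q (fun i => c (i + 1))

@[simp] lemma dyckPart_nil : dyckPart [] = [] := rfl

@[simp] lemma levelSlots_nil : levelSlots [] = 0 := rfl

@[simp] lemma dyckPart_level_cons (p : List MStep) : dyckPart (level :: p) = dyckPart p := rfl

@[simp] lemma dyckPart_ofBool_cons (b : Bool) (p : List MStep) :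
    dyckPart (ofBool b :: p) = b :: dyckPart p := by
  simp [dyckPart]

@[simp] lemma levelSlots_level_cons (p : List MStep) :
    levelSlots (level :: p) = 0 ::ₘ levelSlots p := rfl

@[simp] lemma levelSlots_ofBool_cons (b : Bool) (p : List MStep) :
    levelSlots (ofBool b :: p) = (levelSlots p).map (· + 1) := by
  cases b <;> rfl

@[simp] lemma mheight_zero (p : List MStep) : mheight p 0 = 0 := rfl

@[simp] lemma dheight_zero (q : List Bool) : dheight q 0 = 0 := rfl

@[simp] lemma mheight_cons_succ (a : MStep) (p : List MStep) (t : ℕ) :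
    mheight (a :: p) (t + 1) = mval a + mheight p t := by
  simp [mheight]

@[simp] lemma dheight_cons_succ (b : Bool) (q : List Bool) (t : ℕ) :
    dheight (b :: q) (t + 1) = dstep b + dheight q t := by
  simp [dheight]

lemma forall_sum_take_cons {α : Type*} (f : α → ℤ) (P : ℤ → Prop) (a : α) (l : List α) :
    (∀ t, P (((a :: l).take t).map f).sum) ↔ P 0 ∧ ∀ t, P (f a + ((l.take t).map f).sum) := by
  rw [← Nat.and_forall_add_one]
  simp [List.take_succ_cons]

lemma forall_mheight_cons (P : ℤ → Prop) (a : MStep) (p : List MStep) :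
    (∀ t, P (mheight (a :: p) t)) ↔ P 0 ∧ ∀ t, P (mval a + mheight p t) :=
  forall_sum_take_cons mval P a p

lemma forall_dheight_cons (P : ℤ → Prop) (b : Bool) (q : List Bool) :
    (∀ t, P (dheight (b :: q) t)) ↔ P 0 ∧ ∀ t, P (dstep b + dheight q t) :=
  forall_sum_take_cons dstep P b q

lemma forall_mheight_iff (P : ℤ → Prop) (p : List MStep) :
    (∀ t, P (mheight p t)) ↔ ∀ t, P (dheight (dyckPart p) t) := by
  induction p using MStep.list_induction generalizing P with
  | nil => simp [mheight, dheight, dyckPart]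
  | level p ih =>
    rw [forall_mheight_cons, dyckPart_level_cons]
    simp only [mval, zero_add, ih]
    exact ⟨fun h => h.2, fun h => ⟨h 0, h⟩⟩
  | ofBool b p ih =>
    rw [forall_mheight_cons, dyckPart_ofBool_cons, forall_dheight_cons, mval_ofBool,
      ih (fun h => P (dstep b + h))]

lemma forall_level_iff (P : ℤ → Prop) (p : List MStep) :
    (∀ i < p.length, p.getD i up = level → P (mheight p i)) ↔
      ∀ x ∈ levelSlots p, P (dheight (dyckPart p) x) := by
  induction p using MStep.list_induction generalizing P with
  | nil => simp [levelSlots]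
  | level p ih =>
    simp only [List.length_cons, Nat.forall_lt_succ_left, List.getD_cons_zero,
      List.getD_cons_succ, mheight_zero, mheight_cons_succ, mval, zero_add, ih,
      levelSlots_level_cons, Multiset.forall_mem_cons, dyckPart_level_cons, dheight_zero,
      forall_const]
  | ofBool b p ih =>
    simp only [List.length_cons, Nat.forall_lt_succ_left, List.getD_cons_zero,
      List.getD_cons_succ, mheight_cons_succ, mval_ofBool, ih (fun h => P (dstep b + h)),
      levelSlots_ofBool_cons, Multiset.forall_mem_map_iff, dyckPart_ofBool_cons,
      dheight_cons_succ, ofBool_ne_level, false_imp_iff, true_and]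

lemma sum_map_mval (p : List MStep) : (p.map mval).sum = ((dyckPart p).map dstep).sum := by
  induction p using MStep.list_induction with
  | nil => rfl
  | level p ih => simpa [mval] using ih
  | ofBool b p ih => simp [ih]

theorem isKMotzkin_iff (k : ℤ) (p : List MStep) :
    IsKMotzkin k p ↔ IsDyck (dyckPart p) ∧ ∀ x ∈ levelSlots p, dheight (dyckPart p) x = k :=
  and_congr (and_congr (by rw [sum_map_mval]) (forall_mheight_iff (0 ≤ ·) p))
    (forall_level_iff (· = k) p)

@[simp] lemma dyckPart_replicate_level_append (m : ℕ) (p : List MStep) :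
    dyckPart (List.replicate m level ++ p) = dyckPart p := by
  induction m <;> simp_all [List.replicate_succ]

@[simp] lemma levelSlots_replicate_level_append (m : ℕ) (p : List MStep) :
    levelSlots (List.replicate m level ++ p) = Multiset.replicate m 0 + levelSlots p := by
  induction m <;> simp_all [List.replicate_succ, Multiset.replicate_succ]

@[simp] lemma dyckPart_insertLevels (q : List Bool) (c : ℕ → ℕ) :
    dyckPart (insertLevels q c) = q := by
  induction q generalizing c with
  | nil => simpa [insertLevels] using dyckPart_replicate_level_append (c 0) []
  | cons b q ih => simp [insertLevels, ih]

lemma count_levelSlots_insertLevels (q : List Bool) (c : ℕ → ℕ) (x : ℕ) :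
    (levelSlots (insertLevels q c)).count x = if x ≤ q.length then c x else 0 := by
  induction q generalizing c x with
  | nil =>
    have h := levelSlots_replicate_level_append (c 0) []
    simp only [List.append_nil, levelSlots_nil, add_zero] at h
    cases x <;> simp [insertLevels, h, Multiset.count_replicate]
  | cons b q ih =>
    cases x with
    | zero => simp [insertLevels]
    | succ x =>
      simp [insertLevels, Multiset.count_replicate,
        Multiset.count_map_eq_count' _ _ (add_left_injective 1), ih]

lemma level_cons_insertLevels (q : List Bool) (c : ℕ → ℕ) :
    level :: insertLevels q c = insertLevels q (Function.update c 0 (c 0 + 1)) := by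
  cases q <;> simp [insertLevels, List.replicate_succ]

theorem insertLevels_dyckPart_levelSlots (p : List MStep) :
    insertLevels (dyckPart p) (levelSlots p).count = p := by
  induction p using MStep.list_induction with
  | nil => rfl
  | level p ih =>
    conv_rhs => rw [← ih, level_cons_insertLevels]
    congr 1
    funext x
    cases x <;> simp
  | ofBool b p ih =>
    simp [insertLevels, Multiset.count_map_eq_count' _ _ (add_left_injective 1), ih]

lemma length_eq_length_dyckPart_add_card_levelSlots (p : List MStep) :
    p.length = (dyckPart p).length + Multiset.card (levelSlots p) := by
  induction p using MStep.list_induction with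
  | nil => rfl
  | level p ih => simp [ih]; omega
  | ofBool b p ih => simp [ih]; omega

lemma le_length_dyckPart_of_mem_levelSlots {p : List MStep} {x : ℕ} (hx : x ∈ levelSlots p) :
    x ≤ (dyckPart p).length := by
  induction p using MStep.list_induction generalizing x with
  | nil => simp at hx
  | level p ih =>
    rcases Multiset.mem_cons.1 hx with rfl | hx
    · exact Nat.zero_le _
    · exact ih hx
  | ofBool b p ih =>
    rw [levelSlots_ofBool_cons] at hx
    obtain ⟨y, hy, rfl⟩ := Multiset.mem_map.1 hx
    simpa using ih hy

def feetPositions (q : List Bool) (l : ℤ) : Finset ℕ :=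
  {x ∈ range (q.length + 1) | dheight q x = l}

lemma mem_feetPositions {q : List Bool} {l : ℤ} {x : ℕ} :
    x ∈ feetPositions q l ↔ x ≤ q.length ∧ dheight q x = l := by
  simp [feetPositions]

lemma card_feetPositions (q : List Bool) (l : ℤ) : #(feetPositions q l) = feet q l := by
  rw [feet, List.count_eq_countP, List.countP_map, List.countP_eq_length_filter, Finset.card_def,
    feetPositions, Finset.filter_val, Finset.range_val, Multiset.range, Multiset.filter_coe,
    Multiset.coe_card]
  congr 2 with x

lemma length_eq_and_isKMotzkin_iff {n : ℕ} {k : ℤ} {q : List Bool} {p : List MStep} (hq : IsDyck q)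
    (hn : q.length ≤ n) (hp : dyckPart p = q) :
    p.length = n ∧ IsKMotzkin k p ↔
      Multiset.toFinsupp (levelSlots p) ∈ (feetPositions q k).finsuppAntidiag (n - q.length) := by
  have hslots :
      (∀ x ∈ levelSlots p, dheight q x = k) ↔ ∀ x ∈ levelSlots p, x ∈ feetPositions q k :=
    forall₂_congr fun x hx => by
      rw [mem_feetPositions, ← hp, and_iff_right (le_length_dyckPart_of_mem_levelSlots hx)]
  rw [mem_finsuppAntidiag, Multiset.toFinsupp_support, isKMotzkin_iff, hp, hslots,
    length_eq_length_dyckPart_add_card_levelSlots, hp]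
  have hsum (h : ∀ x ∈ levelSlots p, x ∈ feetPositions q k) :
      (feetPositions q k).sum (Multiset.toFinsupp (levelSlots p)) =
        Multiset.card (levelSlots p) :=
    Multiset.sum_count_eq_card h
  constructor
  · rintro ⟨hlen, -, hsub⟩
    exact ⟨by rw [hsum hsub]; omega, fun x hx => hsub x (Multiset.mem_toFinset.1 hx)⟩
  · rintro ⟨hcard, hsub⟩
    have hsub' : ∀ x ∈ levelSlots p, x ∈ feetPositions q k :=
      fun x hx => hsub (Multiset.mem_toFinset.2 hx)
    rw [hsum hsub'] at hcard
    exact ⟨by omega, hq, hsub'⟩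

lemma toFinsupp_levelSlots_insertLevels {q : List Bool} {c : ℕ →₀ ℕ}
    (hc : ∀ x ∈ c.support, x ≤ q.length) :
    Multiset.toFinsupp (levelSlots (insertLevels q c)) = c := by
  ext x
  rw [Multiset.toFinsupp_apply, count_levelSlots_insertLevels, ite_eq_left_iff]
  exact fun hx => (Finsupp.notMem_support_iff.1 (mt (hc x) hx)).symm

theorem ncard_isKMotzkin_dyckPart_eq (n : ℕ) (k : ℤ) {q : List Bool} (hq : IsDyck q)
    (hn : q.length ≤ n) :
    {p : List MStep | (p.length = n ∧ IsKMotzkin k p) ∧ dyckPart p = q}.ncard =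
      (n - q.length + feet q k - 1).choose (n - q.length) := by
  rw [← card_feetPositions, Nat.add_comm, ← card_finsuppAntidiag_nat_eq_choose,
    ← Set.ncard_coe_finset]
  refine Set.ncard_congr (fun p _ => Multiset.toFinsupp (levelSlots p)) ?_ ?_ ?_
  · rintro p ⟨hpk, hp⟩
    exact (length_eq_and_isKMotzkin_iff hq hn hp).1 hpk
  · rintro p p' ⟨-, hp⟩ ⟨-, hp'⟩ h
    rw [← insertLevels_dyckPart_levelSlots p, ← insertLevels_dyckPart_levelSlots p', hp, hp',
      Multiset.toFinsupp.injective h]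
  · intro c hc
    have hc' := (mem_finsuppAntidiag.1 hc).2
    have hslots := toFinsupp_levelSlots_insertLevels (q := q) fun x hx =>
      (mem_feetPositions.1 (hc' hx)).1
    exact ⟨insertLevels q c,
      ⟨(length_eq_and_isKMotzkin_iff hq hn (dyckPart_insertLevels q c)).2
        (by rw [hslots]; exact hc),
        dyckPart_insertLevels q c⟩, hslots⟩

lemma sum_map_dstep_add_length (q : List Bool) :
    (q.map dstep).sum + q.length = 2 * q.count true := by
  induction q with
  | nil => rfl
  | cons b q ih => cases b <;> simp [dstep] <;> omega

lemma IsDyck.length_eq_two_mul {q : List Bool} (hq : IsDyck q) :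
    q.length = 2 * q.count true := by
  have := sum_map_dstep_add_length q
  rw [hq.1] at this
  omega

noncomputable def dyckPaths (m : ℕ) : Finset (List Bool) :=
  ((List.finite_length_eq Bool m).subset fun _ h => h.1 :
    {q : List Bool | q.length = m ∧ IsDyck q}.Finite).toFinset

@[simp] lemma mem_dyckPaths {m : ℕ} {q : List Bool} :
    q ∈ dyckPaths m ↔ q.length = m ∧ IsDyck q := by
  simp [dyckPaths]

lemma disjoint_dyckPaths {m m' : ℕ} (h : m ≠ m') : Disjoint (dyckPaths m) (dyckPaths m') :=
  Finset.disjoint_left.2 fun _ hq hq' =>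
    h ((mem_dyckPaths.1 hq).1.symm.trans (mem_dyckPaths.1 hq').1)

lemma feet_le_length_add_one (q : List Bool) (l : ℤ) : feet q l ≤ q.length + 1 := by
  rw [← card_feetPositions]
  exact (card_filter_le _ _).trans_eq (card_range _)

lemma dyckFeet_eq_card (m : ℕ) (l : ℤ) (i : ℕ) :
    DyckFeet m l i = #{q ∈ dyckPaths m | feet q l = i} := by
  rw [DyckFeet, ← Set.ncard_coe_finset]
  congr 1
  ext q
  simp [and_assoc]

theorem sum_dyckPaths_comp_feet (m : ℕ) (l : ℤ) (g : ℕ → ℕ) :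
    ∑ q ∈ dyckPaths m, g (feet q l) = ∑ i ∈ range (m + 2), DyckFeet m l i * g i := by
  have hmaps : ∀ q ∈ dyckPaths m, feet q l ∈ range (m + 2) := fun q hq => by
    have := feet_le_length_add_one q l
    rw [(mem_dyckPaths.1 hq).1] at this
    exact mem_range.2 (by omega)
  rw [← sum_fiberwise_of_maps_to' hmaps]
  simp_rw [sum_const, smul_eq_mul, dyckFeet_eq_card]

/-- The number of Motzkin paths of length n with all horizontal steps at level k equals
Σ_j Σ_i p(2j,k,i)·C(n-2j+i-1, n-2j). -/
theorem stmt3 (n k : ℕ) :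
    Set.ncard {p : List MStep | p.length = n ∧ IsKMotzkin (k : ℤ) p} =
      ∑ j ∈ Finset.range (n / 2 + 1), ∑ i ∈ Finset.range (2 * j + 2),
        DyckFeet (2 * j) (k : ℤ) i * Nat.choose (n - 2 * j + i - 1) (n - 2 * j) := by
  have hmaps : ∀ p ∈ {p : List MStep | p.length = n ∧ IsKMotzkin k p},
      dyckPart p ∈ (range (n / 2 + 1)).biUnion fun j => dyckPaths (2 * j) := by
    rintro p ⟨rfl, hp⟩
    have hdyck := ((isKMotzkin_iff k p).1 hp).1
    have hle : (dyckPart p).length ≤ p.length := List.length_filterMap_le _ _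
    rw [hdyck.length_eq_two_mul] at hle
    exact mem_biUnion.2
      ⟨_, mem_range.2 (by omega), mem_dyckPaths.2 ⟨hdyck.length_eq_two_mul, hdyck⟩⟩
  rw [Set.ncard_eq_sum_ncard_fiberwise
      ((List.finite_length_eq MStep n).subset fun _ h => h.1) hmaps,
    sum_biUnion fun j _ j' _ h => disjoint_dyckPaths (by omega)]
  refine sum_congr rfl fun j hj => ?_
  have hjn : 2 * j ≤ n := by have := mem_range.1 hj; omega
  rw [← sum_dyckPaths_comp_feet]
  refine sum_congr rfl fun q hq => ?_
  obtain ⟨hlen, hq⟩ := mem_dyckPaths.1 hq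
  rw [Set.sep_ofPred, ncard_isKMotzkin_dyckPart_eq n k hq (hlen ▸ hjn), hlen]
end

section
/- The number of Motzkin paths of length n in which horizontal steps at the fixed level k may each receive one of r colors is Σ_{j=0}^{⌊n/2⌋} Σ_i p(2j, k, i) · C(n - 2j + i - 1, n - 2j) · r^{n-2j}. -/
/-- A step of a Motzkin path whose horizontal steps carry one of  colors. -/
inductive CStep (r : ℕ)
  | up
  | down
  | level (c : Fin r)

/-- The vertical displacement of a colored Motzkin step. -/
def cval {r : ℕ} : CStep r → ℤ
  | .up => 1
  | .down => -1
  | .level _ => 0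

/-- Height of a colored Motzkin path after its first  steps. -/
def cheight {r : ℕ} (p : List (CStep r)) (k : ℕ) : ℤ := ((p.take k).map cval).sum

/-- A colored Motzkin path: ends at height 0 and never goes below the x-axis. -/
def IsCMotzkin {r : ℕ} (p : List (CStep r)) : Prop :=
  (p.map cval).sum = 0 ∧ ∀ k, 0 ≤ cheight p k

/-- A colored k-Motzkin path: all its (colored) horizontal steps lie at height k. -/
def IsKCMotzkin {r : ℕ} (k : ℤ) (p : List (CStep r)) : Prop :=
  IsCMotzkin p ∧ ∀ i < p.length, (∃ c, p.getD i .up = .level c) → cheight p i = k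

/-!
Deleting the horizontal steps of a colored `k`-Motzkin path `p` leaves a Dyck path `q`, its
skeleton. The deleted steps form `|q| + 1` (possibly empty) runs of colors, the `t`-th run sitting
at the `t`-th lattice point of `q`, and `p` is a `k`-Motzkin path exactly when `q` is a Dyck path
and only runs sitting at the `feet q k` points of height `k` are nonempty. Hence the paths of
length `n` with skeleton `q` of length `2j` correspond to the ways of distributing `n - 2j`
colored steps into `feet q k` runs, of which there are `multichoose (feet q k) (n - 2j) *
r ^ (n - 2j)`: the first run is either empty or starts with one of `r` colors, which is the
recursion `multichoose (c + 1) (h + 1) = multichoose c (h + 1) + multichoose (c + 1) h`.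
-/

namespace ColoredMotzkin

open List

variable {r : ℕ}

def stepOfBool (b : Bool) : CStep r := if b then .up else .down

@[simp] def skeleton : List (CStep r) → List Bool
  | [] => []
  | .up :: p => true :: skeleton p
  | .down :: p => false :: skeleton p
  | .level _ :: p => skeleton p

@[simp] def runs : List (CStep r) → List (List (Fin r))
  | [] => [[]]
  | .up :: p => [] :: runs p
  | .down :: p => [] :: runs p
  | .level c :: p => (c :: (runs p).headI) :: (runs p).tail

def assemble : List Bool → List (List (Fin r)) → List (CStep r)
  | _, [] => []
  | [], c :: _ => c.map .level
  | b :: q, c :: L => c.map .level ++ stepOfBool b :: assemble q L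

@[simp] lemma skeleton_stepOfBool_cons (b : Bool) (p : List (CStep r)) :
    skeleton (stepOfBool b :: p) = b :: skeleton p := by
  cases b <;> rfl

@[simp] lemma runs_stepOfBool_cons (b : Bool) (p : List (CStep r)) :
    runs (stepOfBool b :: p) = [] :: runs p := by
  cases b <;> rfl

@[simp] lemma headI_runs_cons_tail (p : List (CStep r)) :
    (runs p).headI :: (runs p).tail = runs p := by
  cases p with
  | nil => rfl
  | cons s p => cases s <;> rfl

lemma length_runs (p : List (CStep r)) : (runs p).length = (skeleton p).length + 1 := by
  induction p with
  | nil => rfl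
  | cons s p ih =>
    cases s with
    | level c =>
      have := congrArg length (headI_runs_cons_tail p)
      simp only [length_cons] at this
      simp only [skeleton, runs, length_cons]
      omega
    | _ => simp [ih]

lemma assemble_cons_level (q : List Bool) (c : Fin r) (d : List (Fin r))
    (L : List (List (Fin r))) :
    assemble q ((c :: d) :: L) = .level c :: assemble q (d :: L) := by
  cases q <;> rfl

lemma assemble_skeleton_runs (p : List (CStep r)) : assemble (skeleton p) (runs p) = p := by
  induction p with
  | nil => rfl
  | cons s p ih =>
    cases s with
    | up => simpa [assemble, stepOfBool] using ih
    | down => simpa [assemble, stepOfBool] using ih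
    | level c =>
      rw [← headI_runs_cons_tail p] at ih
      rw [skeleton, runs, assemble_cons_level, ih]

@[simp] lemma skeleton_map_level_append (c : List (Fin r)) (p : List (CStep r)) :
    skeleton (c.map .level ++ p) = skeleton p := by
  induction c <;> simp_all

@[simp] lemma runs_map_level_append (c : List (Fin r)) (p : List (CStep r)) :
    runs (c.map .level ++ p) = (c ++ (runs p).headI) :: (runs p).tail := by
  induction c <;> simp_all

lemma skeleton_assemble (q : List Bool) (L : List (List (Fin r)))
    (h : L.length = q.length + 1) : skeleton (assemble q L) = q := by
  induction q generalizing L with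
  | nil =>
    match L, h with
    | [c], _ => simpa [assemble] using skeleton_map_level_append c []
  | cons b q ih => obtain _ | ⟨c, L⟩ := L <;> simp_all [assemble]

lemma runs_assemble (q : List Bool) (L : List (List (Fin r)))
    (h : L.length = q.length + 1) : runs (assemble q L) = L := by
  induction q generalizing L with
  | nil =>
    match L, h with
    | [c], _ => simpa [assemble] using runs_map_level_append c []
  | cons b q ih => obtain _ | ⟨c, L⟩ := L <;> simp_all [assemble]

lemma length_assemble (q : List Bool) (L : List (List (Fin r)))
    (h : L.length = q.length + 1) :
    (assemble q L).length = q.length + (L.map length).sum := by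
  induction q generalizing L with
  | nil =>
    match L, h with
    | [c], _ => simp [assemble]
  | cons b q ih => obtain _ | ⟨c, L⟩ := L <;> simp_all [assemble]; omega

lemma length_eq_length_skeleton_add (p : List (CStep r)) :
    p.length = (skeleton p).length + ((runs p).map length).sum := by
  conv_lhs => rw [← assemble_skeleton_runs p]
  exact length_assemble _ _ (length_runs p)

lemma sum_map_dstep_skeleton (p : List (CStep r)) :
    ((skeleton p).map dstep).sum = (p.map cval).sum := by
  induction p with
  | nil => rfl
  | cons s p ih => cases s <;> simp [dstep, cval, ih]

lemma skeleton_append (p p' : List (CStep r)) :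
    skeleton (p ++ p') = skeleton p ++ skeleton p' := by
  induction p with
  | nil => rfl
  | cons s p ih => cases s <;> simp [ih]

lemma cheight_eq_dheight_skeleton (p : List (CStep r)) (j : ℕ) :
    cheight p j = dheight (skeleton p) (skeleton (p.take j)).length := by
  rw [cheight, dheight, show skeleton p = skeleton (p.take j) ++ skeleton (p.drop j) by
    rw [← skeleton_append, take_append_drop], take_left, sum_map_dstep_skeleton]

lemma exists_length_skeleton_take_eq (p : List (CStep r)) {t : ℕ}
    (ht : t ≤ (skeleton p).length) : ∃ j, (skeleton (p.take j)).length = t := by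
  induction p generalizing t with
  | nil => exact ⟨0, by simp at ht ⊢; omega⟩
  | cons s p ih =>
    obtain _ | t := t
    · exact ⟨0, rfl⟩
    cases s with
    | level c =>
      obtain ⟨j, hj⟩ := ih (t := t + 1) (by simpa using ht)
      exact ⟨j + 1, by simpa using hj⟩
    | _ =>
      obtain ⟨j, hj⟩ := ih (t := t) (by simpa using ht)
      exact ⟨j + 1, by simpa using hj⟩

lemma dheight_of_length_le {q : List Bool} {t : ℕ} (ht : q.length ≤ t) :
    dheight q t = (q.map dstep).sum := by
  rw [dheight, take_of_length_le ht]

lemma isCMotzkin_iff_isDyck_skeleton (p : List (CStep r)) :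
    IsCMotzkin p ↔ IsDyck (skeleton p) := by
  rw [IsCMotzkin, IsDyck, sum_map_dstep_skeleton]
  refine and_congr_right fun hsum => ⟨fun hnn t => ?_, fun hnn j => ?_⟩
  · rcases le_or_gt t (skeleton p).length with ht | ht
    · obtain ⟨j, rfl⟩ := exists_length_skeleton_take_eq p ht
      rw [← cheight_eq_dheight_skeleton]
      exact hnn j
    · rw [dheight_of_length_le ht.le, sum_map_dstep_skeleton, hsum]
  · rw [cheight_eq_dheight_skeleton]
    exact hnn _

lemma runs_getD_ne_nil_iff (p : List (CStep r)) (t : ℕ) :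
    (runs p).getD t [] ≠ [] ↔
      ∃ i < p.length, (∃ c, p.getD i .up = .level c) ∧ (skeleton (p.take i)).length = t := by
  induction p generalizing t with
  | nil => cases t <;> simp
  | cons s p ih =>
    simp only [length_cons, Nat.exists_lt_succ_left, getD_cons_zero, getD_cons_succ, take_zero,
      take_succ_cons]
    cases s with
    | level c =>
      obtain _ | t := t
      · simp
      · have := ih (t + 1)
        rw [← headI_runs_cons_tail p, getD_cons_succ] at this
        simpa using this
    | _ =>
      obtain _ | t := t
      · simp
      · simp only [runs, skeleton, getD_cons_succ, length_cons, ih]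
        simp

lemma forall_level_cheight_eq_iff (k : ℤ) (p : List (CStep r)) :
    (∀ i < p.length, (∃ c, p.getD i .up = .level c) → cheight p i = k) ↔
      ∀ t, (runs p).getD t [] ≠ [] → dheight (skeleton p) t = k := by
  simp only [runs_getD_ne_nil_iff, cheight_eq_dheight_skeleton]
  exact ⟨fun h t ⟨i, hi, hc, ht⟩ => ht ▸ h i hi hc,
    fun h i hi hc => h _ ⟨i, hi, hc, rfl⟩⟩

lemma isKCMotzkin_iff (k : ℤ) (p : List (CStep r)) :
    IsKCMotzkin k p ↔ IsDyck (skeleton p) ∧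
      ∀ t, (runs p).getD t [] ≠ [] → dheight (skeleton p) t = k := by
  rw [IsKCMotzkin, isCMotzkin_iff_isDyck_skeleton, forall_level_cheight_eq_iff]

variable (r) in
def MaskedRuns (m : List Bool) (h : ℕ) : Type :=
  {L : List (List (Fin r)) //
    Forall₂ (fun c b => c ≠ [] → b = true) L m ∧ (L.map length).sum = h}

namespace MaskedRuns

variable {m : List Bool} {h : ℕ}

instance : Subsingleton (MaskedRuns r [] h) :=
  ⟨fun ⟨L, hL, _⟩ ⟨L', hL', _⟩ => by
    rw [forall₂_nil_right_iff] at hL hL'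
    subst hL hL'
    rfl⟩

lemma eq_zero_of_nil (x : MaskedRuns r [] h) : h = 0 := by
  obtain ⟨L, hL, rfl⟩ := x
  rw [forall₂_nil_right_iff.mp hL]
  rfl

instance : Inhabited (MaskedRuns r [] 0) := ⟨⟨[], .nil, rfl⟩⟩

def consNil (b : Bool) (x : MaskedRuns r m h) : MaskedRuns r (b :: m) h :=
  ⟨[] :: x.1, .cons (fun hne => absurd rfl hne) x.2.1, by simpa using x.2.2⟩

def consColor (y : Fin r × MaskedRuns r (true :: m) h) : MaskedRuns r (true :: m) (h + 1) :=
  ⟨(y.1 :: y.2.1.headI) :: y.2.1.tail, by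
    obtain ⟨a, ⟨L, hL, hs⟩⟩ := y
    obtain ⟨c, L, -, hL', rfl⟩ := forall₂_cons_right_iff.mp hL
    exact ⟨.cons (fun _ => rfl) hL', by simp at hs ⊢; omega⟩⟩

lemma consNil_injective (b : Bool) :
    Function.Injective (consNil (r := r) (m := m) (h := h) b) :=
  fun _ _ hxy => Subtype.ext (cons_injective (congrArg Subtype.val hxy))

lemma consColor_injective : Function.Injective (consColor (r := r) (m := m) (h := h)) := by
  rintro ⟨a, ⟨L, hL, -⟩⟩ ⟨a', ⟨L', hL', -⟩⟩
  obtain ⟨c, L, -, -, rfl⟩ := forall₂_cons_right_iff.mp hL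
  obtain ⟨c', L', -, -, rfl⟩ := forall₂_cons_right_iff.mp hL'
  intro hxy
  simp only [consColor, headI_cons, tail_cons] at hxy
  obtain ⟨⟨rfl, rfl⟩, rfl⟩ := hxy
  rfl

lemma consNil_bijective (b : Bool) (hb : b = false ∨ h = 0) :
    Function.Bijective (consNil (r := r) (m := m) (h := h) b) := by
  refine ⟨consNil_injective b, fun ⟨L, hL, hs⟩ => ?_⟩
  obtain ⟨c, L, hc, hL', rfl⟩ := forall₂_cons_right_iff.mp hL
  obtain rfl : c = [] := by
    by_contra hne
    rcases hb with rfl | rfl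
    · exact absurd (hc hne) Bool.false_ne_true
    · simp_all
  exact ⟨⟨L, hL', by simpa using hs⟩, rfl⟩

lemma sumElim_consNil_consColor_bijective :
    Function.Bijective (Sum.elim (consNil true) consColor :
      MaskedRuns r m (h + 1) ⊕ Fin r × MaskedRuns r (true :: m) h →
        MaskedRuns r (true :: m) (h + 1)) := by
  refine ⟨(consNil_injective true).sumElim consColor_injective fun _ _ hxy => ?_,
    fun ⟨L, hL, hs⟩ => ?_⟩
  · simpa [consNil, consColor] using congrArg (·.1.headI) hxy
  obtain ⟨c, L, -, hL', rfl⟩ := forall₂_cons_right_iff.mp hL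
  cases c with
  | nil => exact ⟨.inl ⟨L, hL', by simpa using hs⟩, rfl⟩
  | cons a c =>
    exact ⟨.inr (a, ⟨c :: L, .cons (fun _ => rfl) hL', by simp at hs ⊢; omega⟩), rfl⟩

instance (m : List Bool) (h : ℕ) : Finite (MaskedRuns r m h) := by
  induction m generalizing h with
  | nil => infer_instance
  | cons b m ih =>
    cases b with
    | false => exact .of_surjective _ (consNil_bijective false (.inl rfl)).2
    | true =>
      induction h with
      | zero => exact .of_surjective _ (consNil_bijective true (.inr rfl)).2
      | succ h ihh => exact .of_surjective _ sumElim_consNil_consColor_bijective.2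

lemma card (m : List Bool) (h : ℕ) :
    Nat.card (MaskedRuns r m h) = (m.count true).multichoose h * r ^ h := by
  induction m generalizing h with
  | nil =>
    cases h with
    | zero => simp [Nat.card_unique]
    | succ h =>
      have : IsEmpty (MaskedRuns r [] (h + 1)) :=
        ⟨fun x => absurd (eq_zero_of_nil x) h.succ_ne_zero⟩
      simp
  | cons b m ih =>
    cases b with
    | false => rw [← Nat.card_eq_of_bijective _ (consNil_bijective false (.inl rfl)), ih]; simp
    | true =>
      induction h with
      | zero => rw [← Nat.card_eq_of_bijective _ (consNil_bijective true (.inr rfl)), ih]; simp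
      | succ h ihh =>
        rw [← Nat.card_eq_of_bijective _ sumElim_consNil_consColor_bijective, Nat.card_sum,
          Nat.card_prod, ihh, ih, count_cons_self, Nat.multichoose_succ_succ, Nat.card_fin]
        ring

end MaskedRuns

def levelMask (q : List Bool) (k : ℤ) : List Bool :=
  (range (q.length + 1)).map fun t => decide (dheight q t = k)

lemma count_levelMask (q : List Bool) (k : ℤ) : (levelMask q k).count true = feet q k := by
  simp [levelMask, feet, count, countP_map, Function.comp_def, _root_.beq_eq_decide]

lemma forall₂_levelMask_iff (q : List Bool) (k : ℤ) (L : List (List (Fin r))) :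
    Forall₂ (fun c b => c ≠ [] → b = true) L (levelMask q k) ↔
      L.length = q.length + 1 ∧ ∀ t, L.getD t [] ≠ [] → dheight q t = k := by
  rw [forall₂_iff_get]
  simp only [levelMask, length_map, length_range, get_eq_getElem, getElem_map, getElem_range,
    decide_eq_true_eq, getD_eq_getElem?_getD, and_congr_right_iff]
  intro hlen
  refine ⟨fun H t ht => ?_, fun H i hi _ hne => H i (by simpa [hi] using hne)⟩
  rcases lt_or_ge t L.length with hi | hi
  · exact H t hi (by omega) (by simpa [hi] using ht)
  · simp [hi] at ht

variable (r) in
def skeletonFiberEquiv {q : List Bool} (hq : IsDyck q) {n : ℕ} (hn : q.length ≤ n) (k : ℤ) :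
    {p : List (CStep r) | (p.length = n ∧ IsKCMotzkin k p) ∧ skeleton p = q} ≃
      MaskedRuns r (levelMask q k) (n - q.length) where
  toFun p := ⟨runs p.1, by
    obtain ⟨p, ⟨rfl, hp⟩, rfl⟩ := p
    dsimp only
    rw [forall₂_levelMask_iff, length_runs]
    exact ⟨⟨rfl, ((isKCMotzkin_iff k p).mp hp).2⟩, by
      have := length_eq_length_skeleton_add p; omega⟩⟩
  invFun L := ⟨assemble q L.1, by
    obtain ⟨L, hL, hs⟩ := L
    obtain ⟨hlen, hlevel⟩ := (forall₂_levelMask_iff q k L).mp hL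
    have hsk := skeleton_assemble q L hlen
    refine ⟨⟨?_, (isKCMotzkin_iff k _).mpr ?_⟩, hsk⟩
    · rw [length_assemble q L hlen]
      omega
    · rw [hsk, runs_assemble q L hlen]
      exact ⟨hq, hlevel⟩⟩
  left_inv p := Subtype.ext <| by
    obtain ⟨p, -, rfl⟩ := p
    exact assemble_skeleton_runs p
  right_inv L := Subtype.ext <|
    runs_assemble q L.1 ((forall₂_levelMask_iff q k L.1).mp L.2.1).1

lemma ncard_skeleton_fiber {q : List Bool} (hq : IsDyck q) {n : ℕ} (hn : q.length ≤ n)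
    (k : ℤ) :
    {p : List (CStep r) | (p.length = n ∧ IsKCMotzkin k p) ∧ skeleton p = q}.ncard =
      (feet q k).multichoose (n - q.length) * r ^ (n - q.length) := by
  rw [← Nat.card_coe_set_eq, Nat.card_congr (skeletonFiberEquiv r hq hn k), MaskedRuns.card,
    count_levelMask]

def stepToSum : CStep r → Bool ⊕ Fin r
  | .up => .inl true
  | .down => .inl false
  | .level c => .inr c

instance : Finite (CStep r) :=
  .of_injective stepToSum fun a b => by cases a <;> cases b <;> simp [stepToSum]

lemma sum_map_dstep_add_length (q : List Bool) :
    (q.map dstep).sum + q.length = 2 * (q.count true : ℤ) := by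
  induction q with
  | nil => simp
  | cons b q ih => cases b <;> simp [dstep] <;> omega

lemma even_length_of_isDyck {q : List Bool} (hq : IsDyck q) : Even q.length :=
  ⟨q.count true, by have := sum_map_dstep_add_length q; rw [hq.1] at this; omega⟩

lemma feet_le_length_add_one (q : List Bool) (l : ℤ) : feet q l ≤ q.length + 1 := by
  simpa [feet] using count_le_length (a := l) (l := (range (q.length + 1)).map (dheight q))

noncomputable def dyckUpTo (n : ℕ) : Finset (List Bool) :=
  ((List.finite_length_le Bool n).subset fun _ hq => hq.1 :
    {q : List Bool | q.length ≤ n ∧ IsDyck q}.Finite).toFinset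

lemma mem_dyckUpTo {n : ℕ} {q : List Bool} : q ∈ dyckUpTo n ↔ q.length ≤ n ∧ IsDyck q :=
  Set.Finite.mem_toFinset _

lemma ncard_kcMotzkin_eq_sum_dyckUpTo (n : ℕ) (k : ℤ) :
    {p : List (CStep r) | p.length = n ∧ IsKCMotzkin k p}.ncard =
      ∑ q ∈ dyckUpTo n, (feet q k).multichoose (n - q.length) * r ^ (n - q.length) := by
  have hfin : {p : List (CStep r) | p.length = n ∧ IsKCMotzkin k p}.Finite :=
    (List.finite_length_eq (CStep r) n).subset fun _ hp => hp.1
  have hmaps : ∀ p ∈ hfin.toFinset, skeleton p ∈ dyckUpTo n := by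
    intro p hp
    obtain ⟨rfl, hkc⟩ := hfin.mem_toFinset.mp hp
    have := length_eq_length_skeleton_add p
    exact mem_dyckUpTo.mpr ⟨by omega, ((isKCMotzkin_iff k p).mp hkc).1⟩
  rw [Set.ncard_eq_toFinset_card _ hfin, Finset.card_eq_sum_card_fiberwise hmaps]
  refine Finset.sum_congr rfl fun q hq => ?_
  obtain ⟨hn, hq⟩ := mem_dyckUpTo.mp hq
  rw [← ncard_skeleton_fiber hq hn k, ← Set.ncard_coe_finset]
  congr 1
  ext p
  simp

lemma sum_dyckUpTo_eq_sum_dyckFeet (n : ℕ) (k : ℤ) (g : ℕ → ℕ → ℕ) :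
    ∑ q ∈ dyckUpTo n, g q.length (feet q k) =
      ∑ j ∈ Finset.range (n / 2 + 1), ∑ i ∈ Finset.range (2 * j + 2),
        DyckFeet (2 * j) k i * g (2 * j) i := by
  have hmaps : ∀ q ∈ dyckUpTo n, (⟨q.length / 2, feet q k⟩ : Σ _ : ℕ, ℕ) ∈
      (Finset.range (n / 2 + 1)).sigma fun j => Finset.range (2 * j + 2) := by
    intro q hq
    obtain ⟨hn, hq⟩ := mem_dyckUpTo.mp hq
    have := feet_le_length_add_one q k
    have := Nat.even_iff.mp (even_length_of_isDyck hq)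
    simp only [Finset.mem_sigma, Finset.mem_range]
    omega
  rw [Finset.sum_sigma', ← Finset.sum_fiberwise_of_maps_to hmaps]
  refine Finset.sum_congr rfl fun ⟨j, i⟩ hji => ?_
  have hj : j < n / 2 + 1 := Finset.mem_range.mp (Finset.mem_sigma.mp hji).1
  have hmem : ∀ q, q ∈ (dyckUpTo n).filter
      (fun q => (⟨q.length / 2, feet q k⟩ : Σ _ : ℕ, ℕ) = ⟨j, i⟩) ↔
        q.length = 2 * j ∧ IsDyck q ∧ feet q k = i := by
    intro q
    simp only [Finset.mem_filter, mem_dyckUpTo, Sigma.mk.injEq, heq_eq_eq]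
    constructor
    · rintro ⟨⟨-, hq⟩, hj, hi⟩
      have := Nat.even_iff.mp (even_length_of_isDyck hq)
      exact ⟨by omega, hq, hi⟩
    · rintro ⟨hl, hq, hi⟩
      exact ⟨⟨by omega, hq⟩, by omega, hi⟩
  rw [Finset.sum_congr rfl fun q hq => by rw [((hmem q).mp hq).1, ((hmem q).mp hq).2.2],
    Finset.sum_const, smul_eq_mul, DyckFeet, ← Set.ncard_coe_finset]
  congr 2
  ext q
  exact hmem q

end ColoredMotzkin

/-- The number of Motzkin paths of length n whose horizontal steps all lie at level k and
each carry one of r colors is Σ_j Σ_i p(2j,k,i)·C(n-2j+i-1, n-2j)·r^(n-2j). -/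
theorem stmt4 (n k r : ℕ) :
    Set.ncard {p : List (CStep r) | p.length = n ∧ IsKCMotzkin (k : ℤ) p} =
      ∑ j ∈ Finset.range (n / 2 + 1), ∑ i ∈ Finset.range (2 * j + 2),
        DyckFeet (2 * j) (k : ℤ) i * Nat.choose (n - 2 * j + i - 1) (n - 2 * j) *
          r ^ (n - 2 * j) := by
  rw [ColoredMotzkin.ncard_kcMotzkin_eq_sum_dyckUpTo,
    ColoredMotzkin.sum_dyckUpTo_eq_sum_dyckFeet n k
      fun len i => i.multichoose (n - len) * r ^ (n - len)]
  refine Finset.sum_congr rfl fun j _ => Finset.sum_congr rfl fun i _ => ?_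
  rw [Nat.multichoose_eq, add_comm i, mul_assoc]
end

section
/- Every admissible frame can be obtained from the frame (1,0,0,...) of the empty Dyck path by a finite sequence of lifting operations s(I) = (2, i_0, i_1, ...) and extension operations a(I) = (i_0+1, i_1+1, i_2, ...); more precisely, every Dyck path has the same frame as some path obtained by lifting a path and gluing finitely many copies of the length-2 path at the end. -/
/-- The frame (1,0,0,...) of the empty Dyck path. -/
def baseFrame : ℕ → ℕ := fun k => if k = 0 then 1 else 0

/-- The lifting operation on frames: s(i_0,i_1,...) = (2,i_0,i_1,...). -/
def sOp (I : ℕ → ℕ) : ℕ → ℕ := fun k => if k = 0 then 2 else I (k - 1)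

/-- The extension operation on frames: a(i_0,i_1,i_2,...) = (i_0+1, i_1+1, i_2, ...). -/
def aOp (I : ℕ → ℕ) : ℕ → ℕ := fun k => if k ≤ 1 then I k + 1 else I k

/-- Sequences obtainable from the base frame by liftings and extensions. -/
inductive Reach : (ℕ → ℕ) → Prop
  | base : Reach baseFrame
  | lift {I : ℕ → ℕ} : Reach I → Reach (sOp I)
  | ext {I : ℕ → ℕ} : Reach I → Reach (aOp I)

/-!
Cut a nonempty Dyck path at its first return to the axis: `p = U q D r` with `q`, `r` Dyck.
Concatenating two closed paths adds their frames, less the one shared point at height 0, and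
lifting shifts the frame up by one level and puts two points at height 0. These two rules give
`frame (U q D U q' D) = frame (U q q' D U D)`, so by induction on the length every
nonempty Dyck path has the frame of some `U Q D (U D)^m` with `Q` shorter than the path. The
frame of the latter is `a^m (s (frame Q))`, and induction on the length gives reachability.
-/

def liftPath (q : List Bool) : List Bool := true :: (q ++ [false])

def peaks (m : ℕ) : List Bool := (List.replicate m [true, false]).flatten

def heights (p : List Bool) : List ℤ := (List.range (p.length + 1)).map (dheight p)

section Heights

variable (p r : List Bool) (b : Bool) (n k : ℕ)

lemma dheight_cons_succ_s7 : dheight (b :: p) (k + 1) = dstep b + dheight p k := by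
  simp [dheight]

lemma dheight_of_length_le {p : List Bool} {k : ℕ} (h : p.length ≤ k) :
    dheight p k = (p.map dstep).sum := by
  simp [dheight, List.take_of_length_le h]

lemma dheight_append_of_le {k : ℕ} (h : k ≤ p.length) : dheight (p ++ r) k = dheight p k := by
  simp [dheight, List.take_append_of_le_length h]

lemma dheight_add : dheight p (n + k) = dheight p n + dheight (p.drop n) k := by
  simp [dheight, List.take_add]

lemma dheight_take : dheight (p.take n) k = dheight p (min k n) := by
  simp [dheight, List.take_take]

lemma heights_nil : heights [] = [0] := rfl

lemma heights_cons : heights (b :: p) = 0 :: (heights p).map (dstep b + ·) := by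
  simp only [heights, List.length_cons, List.range_succ_eq_map, List.map_cons, List.map_map]
  congr 2

lemma heights_eq_zero_cons_tail : heights p = 0 :: (heights p).tail := by
  cases p <;> simp [heights_nil, heights_cons]

lemma heights_append :
    heights (p ++ r) = heights p ++ (heights r).tail.map ((p.map dstep).sum + ·) := by
  induction p with
  | nil =>
    rw [heights_nil, List.nil_append, heights_eq_zero_cons_tail r]
    simp
  | cons b p ih =>
    rw [List.cons_append, heights_cons, ih, heights_cons]
    simp [Function.comp_def, add_assoc]

lemma nonneg_of_mem_heights {p : List Bool} (hp : IsDyck p) {x : ℤ} (hx : x ∈ heights p) :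
    0 ≤ x := by
  obtain ⟨k, -, rfl⟩ := List.mem_map.mp hx
  exact hp.2 k

end Heights

lemma isDyck_nil : IsDyck [] := ⟨rfl, fun _ => by simp [dheight]⟩

lemma IsDyck.append {p r : List Bool} (hp : IsDyck p) (hr : IsDyck r) : IsDyck (p ++ r) := by
  refine ⟨by simp [hp.1, hr.1], fun k => ?_⟩
  rcases le_or_gt k p.length with hk | hk
  · rw [dheight_append_of_le _ _ hk]
    exact hp.2 k
  · obtain ⟨j, rfl⟩ := Nat.exists_eq_add_of_le hk.le
    rw [dheight_add, List.drop_left, dheight_append_of_le _ _ le_rfl,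
      dheight_of_length_le le_rfl, hp.1, zero_add]
    exact hr.2 j

lemma IsDyck.take {p : List Bool} (hp : IsDyck p) {n : ℕ} (hn : dheight p n = 0) :
    IsDyck (p.take n) :=
  ⟨hn, fun k => by rw [dheight_take]; exact hp.2 _⟩

lemma IsDyck.drop {p : List Bool} (hp : IsDyck p) {n : ℕ} (hn : dheight p n = 0) :
    IsDyck (p.drop n) := by
  refine ⟨?_, fun k => by simpa [dheight_add, hn] using hp.2 (n + k)⟩
  have := dheight_add p n (p.drop n).length
  rwa [hn, zero_add, dheight_of_length_le le_rfl, dheight_of_length_le (by simp; omega), hp.1,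
    eq_comm] at this

lemma IsDyck.exists_eq_liftPath {p : List Bool} (hp : IsDyck p) (hne : p ≠ [])
    (hpos : ∀ k, 0 < k → k < p.length → 0 < dheight p k) : ∃ q, IsDyck q ∧ p = liftPath q := by
  obtain _ | ⟨b₀, t⟩ := p
  · contradiction
  obtain rfl | ⟨q, b, rfl⟩ := t.eq_nil_or_concat'
  · cases b₀ <;> simp [IsDyck, dstep] at hp
  obtain rfl : b₀ = true := by
    have := hp.2 1
    cases b₀ <;> simp_all [dheight, dstep]
  have hq : ∀ k ≤ q.length, 0 ≤ dheight q k := fun k hk => by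
    have := hpos (k + 1) (by omega) (by simp; omega)
    rw [dheight_cons_succ_s7, dheight_append_of_le _ _ hk] at this
    simp [dstep] at this
    omega
  have hsum : 1 + (q.map dstep).sum + dstep b = 0 := by
    simpa [dstep, add_assoc] using hp.1
  have hq₀ := dheight_of_length_le (le_refl q.length) ▸ hq q.length le_rfl
  obtain rfl : b = false := by
    cases b
    · rfl
    · simp [dstep] at hsum; omega
  refine ⟨q, ⟨by simp [dstep] at hsum; omega, fun k => ?_⟩, rfl⟩
  rcases le_or_gt k q.length with hk | hk
  · exact hq k hk
  · rw [dheight_of_length_le hk.le]; simp [dstep] at hsum; omega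

lemma IsDyck.exists_eq_liftPath_append {p : List Bool} (hp : IsDyck p) (hne : p ≠ []) :
    ∃ q r, IsDyck q ∧ IsDyck r ∧ p = liftPath q ++ r := by
  classical
  have hret : ∃ n, 0 < n ∧ dheight p n = 0 :=
    ⟨p.length, List.length_pos_iff.2 hne, (dheight_of_length_le le_rfl).trans hp.1⟩
  obtain ⟨hn₀, hn⟩ := Nat.find_spec hret
  have hnp : Nat.find hret ≤ p.length :=
    Nat.find_min' hret ⟨List.length_pos_iff.2 hne, (dheight_of_length_le le_rfl).trans hp.1⟩
  obtain ⟨q, hq, hpq⟩ := (hp.take hn).exists_eq_liftPath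
    (List.ne_nil_of_length_pos (by simp; omega)) fun k hk₀ hk => by
      rw [List.length_take, lt_min_iff] at hk
      rw [dheight_take, min_eq_left hk.1.le]
      exact lt_of_le_of_ne (hp.2 k) fun h => Nat.find_min hret hk.1 ⟨hk₀, h.symm⟩
  exact ⟨q, _, hq, hp.drop hn, by rw [← hpq, List.take_append_drop]⟩

lemma frame_eq_count_heights (p : List Bool) (k : ℕ) :
    frame p k = (heights p).count (k : ℤ) :=
  rfl

lemma frame_nil : frame [] = baseFrame := by
  funext k
  cases k <;> simp [frame_eq_count_heights, heights_nil, baseFrame, List.count_singleton]; omega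

lemma frame_append {p : List Bool} (hp : (p.map dstep).sum = 0) (r : List Bool) (k : ℕ) :
    frame (p ++ r) k + (if k = 0 then 1 else 0) = frame p k + frame r k := by
  simp only [frame_eq_count_heights, heights_append, hp, zero_add, List.map_id_fun', id_eq]
  conv_rhs => rw [heights_eq_zero_cons_tail r]
  rw [List.count_append, List.count_cons]
  split_ifs <;> simp_all <;> omega

lemma frame_append_congr {p p' r r' : List Bool} (hp : (p.map dstep).sum = 0)
    (hp' : (p'.map dstep).sum = 0) (h : frame p = frame p') (h' : frame r = frame r') :
    frame (p ++ r) = frame (p' ++ r') := by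
  funext k
  have := frame_append hp r k
  have := frame_append hp' r' k
  rw [h, h'] at *
  omega

lemma sum_liftPath (q : List Bool) :
    ((liftPath q).map dstep).sum = (q.map dstep).sum := by
  simp [liftPath, dstep]

lemma heights_liftPath {q : List Bool} (hq : (q.map dstep).sum = 0) :
    heights (liftPath q) = 0 :: ((heights q).map (1 + ·) ++ [0]) := by
  simp [liftPath, heights_cons, heights_append, hq, dstep, heights_nil]

lemma frame_liftPath {q : List Bool} (hq : IsDyck q) : frame (liftPath q) = sOp (frame q) := by
  funext k
  rw [frame_eq_count_heights, heights_liftPath hq.1, sOp]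
  cases k with
  | zero =>
    have : ((heights q).map (1 + ·)).count 0 = 0 := by
      simp only [List.count_eq_zero, List.mem_map, not_exists, not_and]
      intro x hx
      have := nonneg_of_mem_heights hq hx
      omega
    simp [this]
  | succ k =>
    have := List.count_map_of_injective (heights q) (1 + ·) (add_right_injective 1) (k : ℤ)
    have hk : (0 : ℤ) ≠ k + 1 := by omega
    simp_all [frame_eq_count_heights, add_comm]

lemma frame_append_liftPath_nil {p : List Bool} (hp : (p.map dstep).sum = 0) :
    frame (p ++ liftPath []) = aOp (frame p) := by
  funext k
  have h := frame_append hp (liftPath []) k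
  rw [frame_liftPath isDyck_nil, frame_nil] at h
  rcases k with _ | _ | k <;> simp [sOp, aOp, baseFrame] at h ⊢ <;> omega

lemma frame_liftPath_append_liftPath {q q' : List Bool} (hq : IsDyck q) (hq' : IsDyck q') :
    frame (liftPath q ++ liftPath q') = frame (liftPath (q ++ q') ++ liftPath []) := by
  funext k
  have h := frame_append ((sum_liftPath q).trans hq.1) (liftPath q') k
  have h' := frame_append ((sum_liftPath _).trans (hq.append hq').1) (liftPath []) k
  rw [frame_liftPath hq, frame_liftPath hq', frame_liftPath (hq.append hq'),
    frame_liftPath isDyck_nil, frame_nil] at *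
  rcases k with _ | k
  · simp [sOp] at h h' ⊢; omega
  · have := frame_append hq.1 q' k
    simp [sOp, baseFrame] at h h' ⊢; omega

lemma peaks_succ (m : ℕ) : peaks (m + 1) = liftPath [] ++ peaks m := rfl

lemma frame_append_peaks {p : List Bool} (hp : (p.map dstep).sum = 0) (m : ℕ) :
    frame (p ++ peaks m) = aOp^[m] (frame p) := by
  induction m generalizing p with
  | zero => simp [peaks]
  | succ m ih =>
    rw [peaks_succ, ← List.append_assoc, ih (by simp [hp, sum_liftPath]),
      frame_append_liftPath_nil hp, Function.iterate_succ_apply]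

theorem IsDyck.exists_frame_eq_liftPath_append_peaks {p : List Bool} (hp : IsDyck p)
    (hne : p ≠ []) : ∃ q m, IsDyck q ∧ q.length < p.length ∧
      frame p = frame (liftPath q ++ peaks m) := by
  obtain ⟨q, r, hq, hr, rfl⟩ := hp.exists_eq_liftPath_append hne
  rcases eq_or_ne r [] with rfl | hr₀
  · exact ⟨q, 0, hq, by simp [liftPath], by simp [peaks]⟩
  obtain ⟨Q, m, hQ, hQr, hrQ⟩ := hr.exists_frame_eq_liftPath_append_peaks hr₀
  have hqQ := hq.append hQ
  have hqs := (sum_liftPath q).trans hq.1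
  refine ⟨q ++ Q, m + 1, hqQ, ?_, ?_⟩
  · simp [liftPath]; omega
  calc frame (liftPath q ++ r)
      = frame ((liftPath q ++ liftPath Q) ++ peaks m) := by
        rw [List.append_assoc]
        exact frame_append_congr hqs hqs rfl hrQ
    _ = frame ((liftPath (q ++ Q) ++ liftPath []) ++ peaks m) :=
        frame_append_congr (by simp [sum_liftPath, hq.1, hQ.1])
          (by simp [sum_liftPath, hq.1, hQ.1]) (frame_liftPath_append_liftPath hq hQ) rfl
    _ = frame (liftPath (q ++ Q) ++ peaks (m + 1)) := by rw [List.append_assoc, peaks_succ]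
termination_by p.length
decreasing_by subst_vars; simp [liftPath]; omega

theorem reach_aOp_iterate {I : ℕ → ℕ} (hI : Reach I) (m : ℕ) : Reach (aOp^[m] I) := by
  induction m with
  | zero => exact hI
  | succ m ih => rw [Function.iterate_succ_apply']; exact ih.ext

theorem IsDyck.reach_frame {p : List Bool} (hp : IsDyck p) : Reach (frame p) := by
  rcases eq_or_ne p [] with rfl | hne
  · exact frame_nil ▸ Reach.base
  obtain ⟨q, m, hq, hlen, hpq⟩ := hp.exists_frame_eq_liftPath_append_peaks hne
  rw [hpq, frame_append_peaks ((sum_liftPath q).trans hq.1), frame_liftPath hq]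
  exact reach_aOp_iterate hq.reach_frame.lift m
termination_by p.length

/-- Every admissible frame is obtained from (1,0,0,...) by liftings and extensions;
more precisely, every nonempty Dyck path has the same frame as a path obtained by lifting
a path and gluing finitely many copies of the length-2 path UD at the end. -/
theorem stmt7 :
    (∀ I : ℕ → ℕ, Admissible I → Reach I) ∧
    (∀ p : List Bool, IsDyck p → p ≠ [] →
      ∃ (q : List Bool) (m : ℕ), IsDyck q ∧
        frame p = frame ((true :: (q ++ [false])) ++ (List.replicate m [true, false]).flatten)) := by
  refine ⟨fun I ⟨p, hp, hpI⟩ => hpI ▸ hp.reach_frame, fun p hp hne => ?_⟩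
  obtain ⟨q, m, hq, -, hpq⟩ := hp.exists_frame_eq_liftPath_append_peaks hne
  exact ⟨q, m, hq, hpq⟩
end

section
/- For Dyck paths x_1 and x_2, the paths s(x_1) ∧ s(x_2) and s(x_1 ∧ x_2) ∧ s(0) have the same frame, where s denotes lifting, ∧ denotes gluing (concatenation), and 0 is the empty path. -/
def levels (p : List Bool) : Multiset ℤ :=
  ((List.range (p.length + 1)).map (dheight p) : Multiset ℤ)

def lift (x : List Bool) : List Bool := true :: (x ++ [false])

lemma feet_eq_count_levels (p : List Bool) (l : ℤ) : feet p l = (levels p).count l :=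
  (Multiset.coe_count _ _).symm

@[simp]
lemma levels_nil : levels [] = {0} := rfl

lemma levels_cons (b : Bool) (p : List Bool) :
    levels (b :: p) = 0 ::ₘ (levels p).map (dstep b + ·) := by
  simp only [levels, List.length_cons, List.range_succ_eq_map, List.map_cons, List.map_map,
    Multiset.map_coe, Multiset.cons_coe]
  rfl

lemma levels_append (p q : List Bool) :
    (p.map dstep).sum ::ₘ levels (p ++ q) = levels p + (levels q).map ((p.map dstep).sum + ·) := by
  induction p with
  | nil => simp [← Multiset.singleton_add]
  | cons b p ih =>
    have ih' := congrArg (Multiset.map (dstep b + ·)) ih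
    simp only [Multiset.map_cons, Multiset.map_add, Multiset.map_map, Function.comp_def,
      ← add_assoc] at ih'
    simp [levels_cons, ← ih', Multiset.cons_swap]

lemma levels_append_of_sum_eq_zero {p : List Bool} (hp : (p.map dstep).sum = 0) (q : List Bool) :
    0 ::ₘ levels (p ++ q) = levels p + levels q := by
  simpa [hp] using levels_append p q

lemma sum_map_dstep_lift (x : List Bool) : ((lift x).map dstep).sum = (x.map dstep).sum := by
  simp [lift, dstep]

lemma levels_lift (x : List Bool) :
    levels (lift x) = 0 ::ₘ (x.map dstep).sum ::ₘ (levels x).map (1 + ·) := by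
  have hdown : levels (x ++ [false]) = ((x.map dstep).sum - 1) ::ₘ levels x := by
    rw [← Multiset.cons_inj_right (x.map dstep).sum, levels_append, levels_cons, levels_nil]
    simp [dstep, sub_eq_add_neg, add_comm (levels x), Multiset.singleton_add]
  rw [lift, levels_cons, hdown]
  simp [dstep]

/-- The paths s(x₁) ∧ s(x₂) and s(x₁ ∧ x₂) ∧ s(0) have the same frame, where s is lifting
(prepend an up step and append a down step), ∧ is concatenation, and 0 is the empty path. -/
theorem stmt16 (x1 x2 : List Bool) (h1 : IsDyck x1) (h2 : IsDyck x2) :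
    frame ((true :: (x1 ++ [false])) ++ (true :: (x2 ++ [false]))) =
      frame ((true :: ((x1 ++ x2) ++ [false])) ++ [true, false]) := by
  show frame (lift x1 ++ lift x2) = frame (lift (x1 ++ x2) ++ lift [])
  have s1 : (x1.map dstep).sum = 0 := h1.1
  have s2 : (x2.map dstep).sum = 0 := h2.1
  have s12 : ((x1 ++ x2).map dstep).sum = 0 := by simp [s1, s2]
  have h12 : 1 ::ₘ (levels (x1 ++ x2)).map (1 + ·) =
      (levels x1).map (1 + ·) + (levels x2).map (1 + ·) := by
    rw [← Multiset.map_add, ← levels_append_of_sum_eq_zero s1, Multiset.map_cons, add_zero]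
  have hlevels : levels (lift x1 ++ lift x2) = levels (lift (x1 ++ x2) ++ lift []) := by
    rw [← Multiset.cons_inj_right 0,
      levels_append_of_sum_eq_zero (by rw [sum_map_dstep_lift, s1]),
      levels_append_of_sum_eq_zero (by rw [sum_map_dstep_lift, s12]),
      levels_lift, levels_lift, levels_lift, levels_lift, s1, s2, s12]
    simp [Multiset.cons_add, Multiset.add_cons, ← h12, add_comm _ ({1} : Multiset ℤ),
      Multiset.singleton_add]
  funext k
  simp only [frame, feet_eq_count_levels]
  exact congrArg (Multiset.count (k : ℤ)) hlevels
end

section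
/- For a Dyck path with frame (i_0, ..., i_f, 0, ...), the number v_k of up steps joining levels k and k+1 satisfies v_k = i_k - i_{k-1} + i_{k-2} - ... + (-1)^k i_0 + (-1)^{k+1} for 0 ≤ k ≤ f-1; in particular v_k depends only on the frame and not on the particular path. -/
/-- The number of up steps of a path going from height k to height k+1. -/
def upCount (p : List Bool) (k : ℤ) : ℕ :=
  (List.range p.length).countP (fun i => p.getD i false && decide (dheight p i = k))

def downCount (p : List Bool) (k : ℤ) : ℕ :=
  (List.range p.length).countP (fun i => !p.getD i false && decide (dheight p i = k))

lemma dheight_succ (p : List Bool) {n : ℕ} (hn : n < p.length) :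
    dheight p (n + 1) = dheight p n + dstep (p.getD n false) := by
  rw [dheight, dheight, List.take_add_one, List.getElem?_eq_getElem hn,
    List.getD_eq_getElem _ _ hn]
  simp only [Option.toList_some, List.map_append, List.sum_append, List.map_singleton,
    List.sum_singleton]

lemma dheight_length (p : List Bool) : dheight p p.length = (p.map dstep).sum := by
  simp [dheight]

/-- Up steps from `l` and down steps from `l + 1` cross the level `l + 1/2` in alternating
directions, so their difference only records on which side of that level the path starts and
ends. -/
lemma countP_up_sub_countP_down_range (p : List Bool) (l : ℤ) {n : ℕ} (hn : n ≤ p.length) :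
    ((List.range n).countP (fun i => p.getD i false && decide (dheight p i = l)) : ℤ)
      - (List.range n).countP (fun i => !p.getD i false && decide (dheight p i = l + 1))
    = (if l < dheight p n then 1 else 0) - (if l < 0 then 1 else 0) := by
  induction n with
  | zero => simp [dheight]
  | succ n ih =>
    have hstep := dheight_succ p (n := n) hn
    have ih := ih (by omega)
    rw [List.range_succ, List.countP_append, List.countP_append, List.countP_singleton,
      List.countP_singleton]
    cases hb : p.getD n false <;> simp only [hb, dstep] at hstep ⊢ <;>
      simp only [hstep, Bool.not_false, Bool.not_true, Bool.true_and, Bool.false_and,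
        decide_eq_true_eq, Bool.false_eq_true, if_false] <;>
      push_cast <;> split_ifs at ih ⊢ <;> omega

lemma upCount_eq_downCount_add_one (p : List Bool) (hp : (p.map dstep).sum = 0) (l : ℤ) :
    upCount p l = downCount p (l + 1) := by
  have h := countP_up_sub_countP_down_range p l le_rfl
  rw [dheight_length, hp, sub_self] at h
  unfold upCount downCount
  omega

lemma feet_eq_upCount_add_downCount (p : List Bool) (hp : (p.map dstep).sum = 0) (l : ℤ) :
    feet p l = upCount p l + downCount p l + if l = 0 then 1 else 0 := by
  have hend : dheight p p.length = 0 := by rw [dheight_length, hp]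
  rw [feet, List.count_eq_countP, List.countP_map, List.range_succ, List.countP_append,
    List.countP_singleton, List.countP_eq_countP_filter_add _ _ (fun i => p.getD i false),
    List.countP_filter, List.countP_filter]
  simp only [upCount, downCount, Function.comp_def, hend, beq_eq_decide, @eq_comm _ 0 l,
    Bool.and_comm (decide _), decide_eq_true_eq]

lemma downCount_zero (p : List Bool) (hp : ∀ k, 0 ≤ dheight p k) : downCount p 0 = 0 := by
  refine List.countP_eq_zero.2 fun i hi hdown => ?_
  simp only [Bool.and_eq_true, Bool.not_eq_true', decide_eq_true_eq] at hdown
  have hstep := dheight_succ p (List.mem_range.1 hi)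
  rw [hdown.1, hdown.2, dstep, if_neg Bool.false_ne_true] at hstep
  linarith [hp (i + 1)]

lemma frame_zero (p : List Bool) (hp : IsDyck p) : frame p 0 = upCount p 0 + 1 := by
  simpa [frame, downCount_zero p hp.2] using feet_eq_upCount_add_downCount p hp.1 0

lemma frame_succ (p : List Bool) (hp : (p.map dstep).sum = 0) (k : ℕ) :
    frame p (k + 1) = upCount p (k + 1) + upCount p k := by
  have h := feet_eq_upCount_add_downCount p hp (k + 1)
  rw [← upCount_eq_downCount_add_one p hp, if_neg (by omega)] at h
  simpa [frame] using h

lemma eq_alternating_sum_of_add_eq {a b : ℕ → ℤ} (h₀ : a 0 + 1 = b 0)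
    (hsucc : ∀ k, a (k + 1) + a k = b (k + 1)) (k : ℕ) :
    a k = (∑ t ∈ Finset.range (k + 1), (-1) ^ (k - t) * b t) + (-1) ^ (k + 1) := by
  induction k with
  | zero =>
    simp only [zero_add, Finset.sum_range_one, Nat.sub_self, pow_zero, one_mul, pow_one]
    omega
  | succ k ih =>
    have hneg : ∑ t ∈ Finset.range (k + 1), (-1 : ℤ) ^ (k + 1 - t) * b t
        = -∑ t ∈ Finset.range (k + 1), (-1) ^ (k - t) * b t := by
      rw [← Finset.sum_neg_distrib]
      refine Finset.sum_congr rfl fun t ht => ?_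
      rw [Nat.sub_add_comm (Finset.mem_range_succ_iff.1 ht), pow_succ]
      ring
    rw [Finset.sum_range_succ, hneg, Nat.sub_self, pow_zero, one_mul, pow_succ]
    linarith [hsucc k]

theorem stmt19_general (p : List Bool) (hp : IsDyck p) (k : ℕ) :
    (upCount p (k : ℤ) : ℤ) =
      (∑ t ∈ Finset.range (k + 1), (-1) ^ (k - t) * (frame p t : ℤ)) + (-1) ^ (k + 1) :=
  eq_alternating_sum_of_add_eq (a := fun k => upCount p k) (b := fun t => frame p t)
    (by simp [frame_zero p hp]) (fun k => by simp [frame_succ p hp.1]) k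

/-- For a Dyck path with frame (i_0,...,i_f,0,...), the number of up steps joining levels
k and k+1 is i_k - i_{k-1} + ... + (-1)^k i_0 + (-1)^(k+1); in particular it depends only
on the frame. -/
theorem stmt19 (p : List Bool) (hp : IsDyck p) (f : ℕ)
    (hf : frame p f ≠ 0) (hz : ∀ k > f, frame p k = 0) (k : ℕ) (hk : k < f) :
    (upCount p (k : ℤ) : ℤ) =
      (∑ t ∈ Finset.range (k + 1), (-1) ^ (k - t) * (frame p t : ℤ)) + (-1) ^ (k + 1) :=
  stmt19_general p hp k
end
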